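/- Let g be the Lie algebra of Sol with basis X1,X2,X3, [X1,X2]=X2, [X1,X3]=-X3, [X2,X3]=0, with the Lorentzian inner product whose matrix in this basis is [[4/(u²-v²),0,0],[0,1,u/v],[0,u/v,1]], where v>0, u<v and u≠-v, so that this matrix is a Lorentzian metric. Then the Ricci tensor matrix is [[2v²/(u²-v²),0,0],[0,-u²/2,-uv/2],[0,-uv/2,-u²/2]] and the scalar curvature equals v²/2. -/

import Mathlib

noncomputable section

/-- The `sol` bracket in the standard basis `(X1,X2,X3)`:
`[X1,X2]=X2`, `[X1,X3]=-X3`, `[X2,X3]=0`. -/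
def br (w z : Fin 3 → ℝ) : Fin 3 → ℝ :=
  ![0, w 0 * z 1 - w 1 * z 0, -(w 0 * z 2 - w 2 * z 0)]

/-- The Lorentzian metric with matrix
`[[4/(u²-v²),0,0],[0,1,u/v],[0,u/v,1]]`. -/
def G (u v : ℝ) : Matrix (Fin 3) (Fin 3) ℝ :=
  !![4 / (u ^ 2 - v ^ 2), 0, 0; 0, 1, u / v; 0, u / v, 1]

/-- The corresponding inner product. -/
def ip (u v : ℝ) (x y : Fin 3 → ℝ) : ℝ := dotProduct x ((G u v).mulVec y)

set_option maxHeartbeats 2000000 in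
/-- For `v > 0`, `u < v` and `u² ≠ v²` (so that the matrix is a Lorentzian
metric): with the Levi-Civita product `L` given by Koszul's formula, curvature
`K(x,y) = L_{[x,y]} - [L_x,L_y]` and Ricci tensor
`ric(x,y) = tr(w ↦ K(x,w)y)`, the matrix of `ric` is
`[[2v²/(u²-v²),0,0],[0,-u²/2,-uv/2],[0,-uv/2,-u²/2]]` and the scalar
curvature `tr(Ric)` equals `v²/2`. -/
theorem ricci_sol_diag (u v : ℝ) (hv : 0 < v) (huv : u < v) (hne : u ^ 2 ≠ v ^ 2)
    (L : (Fin 3 → ℝ) → (Fin 3 → ℝ) → (Fin 3 → ℝ))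
    (hL : ∀ x y z, 2 * ip u v (L x y) z =
      ip u v (br x y) z + ip u v (br z x) y + ip u v (br z y) x)
    (K : (Fin 3 → ℝ) → (Fin 3 → ℝ) → (Fin 3 → ℝ) → (Fin 3 → ℝ))
    (hK : ∀ x y z, K x y z = L (br x y) z - L x (L y z) + L y (L x z))
    (ric : (Fin 3 → ℝ) → (Fin 3 → ℝ) → ℝ)
    (hric : ∀ x y, ric x y = ∑ i : Fin 3, K x (Pi.single i 1) y i) :
    (∀ i j : Fin 3, ric (Pi.single i 1) (Pi.single j 1) =
      !![2 * v ^ 2 / (u ^ 2 - v ^ 2), 0, 0;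
         0, -u ^ 2 / 2, -(u * v) / 2;
         0, -(u * v) / 2, -u ^ 2 / 2] i j) ∧
    (∀ R : Matrix (Fin 3) (Fin 3) ℝ,
      (∀ x y, ip u v (R.mulVec x) y = ric x y) → R.trace = v ^ 2 / 2) := by

  have hv' : v ≠ 0 := ne_of_gt hv
  have hd : u ^ 2 - v ^ 2 ≠ 0 := sub_ne_zero.mpr hne
  have hd' : v ^ 2 - u ^ 2 ≠ 0 := sub_ne_zero.mpr (Ne.symm hne)
  set F : (Fin 3 → ℝ) → (Fin 3 → ℝ) → (Fin 3 → ℝ) := fun x y =>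
    ![(v ^ 2 - u ^ 2) / 4 * (x 2 * y 2 - x 1 * y 1),
      -(u ^ 2 * (x 0 * y 1) + v ^ 2 * (x 1 * y 0) + u * v * (x 0 * y 2 + x 2 * y 0)) /
        (v ^ 2 - u ^ 2),
      (u * v * (x 0 * y 1 + x 1 * y 0) + u ^ 2 * (x 0 * y 2) + v ^ 2 * (x 2 * y 0)) /
        (v ^ 2 - u ^ 2)] with hFdef
  -- values of ip against basis vectors
  have ip0 : ∀ w : Fin 3 → ℝ, ip u v w (Pi.single 0 1) = 4 / (u ^ 2 - v ^ 2) * w 0 := by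
    intro w
    simp [ip, G, Matrix.mulVec, dotProduct, Fin.sum_univ_three, Pi.single_apply,
      Matrix.vecHead, Matrix.vecTail]
    ring
  have ip1 : ∀ w : Fin 3 → ℝ, ip u v w (Pi.single 1 1) = w 1 + u / v * w 2 := by
    intro w
    simp [ip, G, Matrix.mulVec, dotProduct, Fin.sum_univ_three, Pi.single_apply,
      Matrix.vecHead, Matrix.vecTail]
    ring
  have ip2 : ∀ w : Fin 3 → ℝ, ip u v w (Pi.single 2 1) = u / v * w 1 + w 2 := by
    intro w
    simp [ip, G, Matrix.mulVec, dotProduct, Fin.sum_univ_three, Pi.single_apply,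
      Matrix.vecHead, Matrix.vecTail]
    ring
  -- F satisfies the Koszul formula
  have key : ∀ x y k, 2 * ip u v (F x y) (Pi.single k 1) =
      ip u v (br x y) (Pi.single k 1) + ip u v (br (Pi.single k 1) x) y
        + ip u v (br (Pi.single k 1) y) x := by
    intro x y k
    fin_cases k <;>
      simp [ip, G, br, hFdef, Matrix.mulVec, dotProduct, Fin.sum_univ_three,
        Pi.single_apply, Matrix.vecHead, Matrix.vecTail] <;>
      field_simp <;> ring
  -- hence L = F by nondegeneracy
  have hLF : ∀ x y, L x y = F x y := by
    intro x y
    have e0 : ip u v (L x y) (Pi.single 0 1) = ip u v (F x y) (Pi.single 0 1) := by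
      have := hL x y (Pi.single 0 1); have := key x y 0; linarith
    have e1 : ip u v (L x y) (Pi.single 1 1) = ip u v (F x y) (Pi.single 1 1) := by
      have := hL x y (Pi.single 1 1); have := key x y 1; linarith
    have e2 : ip u v (L x y) (Pi.single 2 1) = ip u v (F x y) (Pi.single 2 1) := by
      have := hL x y (Pi.single 2 1); have := key x y 2; linarith
    rw [ip0, ip0] at e0; rw [ip1, ip1] at e1; rw [ip2, ip2] at e2
    have h0 : L x y 0 = F x y 0 := by
      have h4 : (4 : ℝ) / (u ^ 2 - v ^ 2) ≠ 0 := div_ne_zero (by norm_num) hd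
      exact mul_left_cancel₀ h4 e0
    have e1' : v * L x y 1 + u * L x y 2 = v * F x y 1 + u * F x y 2 := by
      field_simp at e1; linarith
    have e2' : u * L x y 1 + v * L x y 2 = u * F x y 1 + v * F x y 2 := by
      field_simp at e2; linarith
    have h1 : L x y 1 = F x y 1 := by
      have h : (v ^ 2 - u ^ 2) * L x y 1 = (v ^ 2 - u ^ 2) * F x y 1 := by nlinarith [e1', e2']
      exact mul_left_cancel₀ hd' h
    have h2 : L x y 2 = F x y 2 := by
      have h : (v ^ 2 - u ^ 2) * L x y 2 = (v ^ 2 - u ^ 2) * F x y 2 := by nlinarith [e1', e2']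
      exact mul_left_cancel₀ hd' h
    funext k; fin_cases k <;> assumption
  have hKF : ∀ x y z, K x y z = F (br x y) z - F x (F y z) + F y (F x z) := by
    intro x y z; rw [hK]; simp only [hLF]
  have part1 : ∀ i j : Fin 3, ric (Pi.single i 1) (Pi.single j 1) =
      !![2 * v ^ 2 / (u ^ 2 - v ^ 2), 0, 0;
         0, -u ^ 2 / 2, -(u * v) / 2;
         0, -(u * v) / 2, -u ^ 2 / 2] i j := by
    intro i j
    fin_cases i <;> fin_cases j <;>
      (rw [hric]; simp only [hKF];
       simp [hFdef, br, Fin.sum_univ_three, Pi.single_apply, Matrix.vecHead, Matrix.vecTail];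
       try field_simp; try ring)
  refine ⟨part1, ?_⟩
  intro R hR
  have col : ∀ i j : Fin 3, R.mulVec (Pi.single j 1) i = R i j := by
    intro i j; rw [Matrix.mulVec_single]; simp
  have E00 := hR (Pi.single 0 1) (Pi.single 0 1)
  rw [ip0, col, part1] at E00
  have E11 := hR (Pi.single 1 1) (Pi.single 1 1)
  rw [ip1, col, col, part1] at E11
  have E12 := hR (Pi.single 1 1) (Pi.single 2 1)
  rw [ip2, col, col, part1] at E12
  have E21 := hR (Pi.single 2 1) (Pi.single 1 1)
  rw [ip1, col, col, part1] at E21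
  have E22 := hR (Pi.single 2 1) (Pi.single 2 1)
  rw [ip2, col, col, part1] at E22
  simp [Matrix.cons_val_zero, Matrix.cons_val_one] at E00 E11 E12 E21 E22
  have h00 : R 0 0 = v ^ 2 / 2 := by
    field_simp at E00; linarith
  have h11 : R 1 1 = 0 := by
    have key : (v ^ 2 - u ^ 2) * R 1 1 = 0 := by
      field_simp at E11 E12; linear_combination (v * E11 - u * E12) / 2
    exact (mul_eq_zero.mp key).resolve_left hd'
  have h22 : R 2 2 = 0 := by
    have key : (v ^ 2 - u ^ 2) * R 2 2 = 0 := by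
      field_simp at E21 E22; linear_combination (v * E22 - u * E21) / 2
    exact (mul_eq_zero.mp key).resolve_left hd'
  simp [Matrix.trace, Fin.sum_univ_three, Matrix.diag, h00, h11, h22]
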